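/- arXiv:1111.0506 — 8 statements merged into one kernel-verified Lean document; each statement's English description precedes it below -/
import Mathlib

section
/- Let X be a compact metric space and T : X → X a homeomorphism. Then the quotient group K₀(X,T) = C(X,ℤ)/β C(X,ℤ) is torsion-free, where C(X,ℤ) is the group of continuous integer-valued functions on X and β f = f ∘ T − f. -/
/-! If `k • f = g ∘ T - g` with `k ≠ 0`, then `g (T x) ≡ g x (mod k)` at every point, so the
pointwise quotient `g / k` (continuous, as `ℤ` is discrete) satisfies `(g / k) ∘ T - g / k = f`. -/

theorem Int.ediv_sub_ediv_of_sub_eq_mul {a b k c : ℤ} (hk : k ≠ 0) (h : b - a = k * c) :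
    b / k - a / k = c := by
  rw [show b = a + k * c by linarith, Int.add_mul_ediv_left _ _ hk]
  ring

namespace ContinuousMap

variable {X : Type*} [TopologicalSpace X]

def ediv (g : C(X, ℤ)) (k : ℤ) : C(X, ℤ) :=
  (⟨(· / k), continuous_of_discreteTopology⟩ : C(ℤ, ℤ)).comp g

@[simp]
theorem ediv_apply (g : C(X, ℤ)) (k : ℤ) (x : X) : g.ediv k x = g x / k :=
  rfl

theorem eq_ediv_comp_sub_ediv_of_zsmul_eq {T : C(X, X)} {f g : C(X, ℤ)} {k : ℤ} (hk : k ≠ 0)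
    (h : k • f = g.comp T - g) : f = (g.ediv k).comp T - g.ediv k := by
  ext x
  have hx : g (T x) - g x = k * f x := by
    simpa using (congrArg (· x) h).symm
  simp [Int.ediv_sub_ediv_of_sub_eq_mul hk hx]

end ContinuousMap

theorem K0_torsionFree_general {X : Type*} [MetricSpace X]
    (T : X ≃ₜ X) (B : AddSubgroup C(X, ℤ))
    (hB : ∀ f : C(X, ℤ), f ∈ B ↔ ∃ g : C(X, ℤ), f = g.comp (T : C(X, X)) - g) :
    ∀ (a : C(X, ℤ) ⧸ B) (k : ℕ), k ≠ 0 → k • a = 0 → a = 0 := by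
  intro a k hk hka
  obtain ⟨f, rfl⟩ := QuotientAddGroup.mk_surjective a
  obtain ⟨g, hg⟩ := (hB (k • f)).mp <| by
    rwa [← QuotientAddGroup.eq_zero_iff, QuotientAddGroup.mk_nsmul]
  rw [← natCast_zsmul] at hg
  rw [QuotientAddGroup.eq_zero_iff, hB]
  exact ⟨g.ediv k, ContinuousMap.eq_ediv_comp_sub_ediv_of_zsmul_eq (by exact_mod_cast hk) hg⟩

/-- For a compact metric space `X` and a homeomorphism `T : X → X`,
the quotient group `K₀(X,T) = C(X,ℤ) ⧸ β C(X,ℤ)` is torsion-free, where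
`β f = f ∘ T - f`. -/
theorem K0_torsionFree {X : Type*} [MetricSpace X] [CompactSpace X]
    (T : X ≃ₜ X) (B : AddSubgroup C(X, ℤ))
    (hB : ∀ f : C(X, ℤ), f ∈ B ↔ ∃ g : C(X, ℤ), f = g.comp (T : C(X, X)) - g) :
    ∀ (a : C(X, ℤ) ⧸ B) (k : ℕ), k ≠ 0 → k • a = 0 → a = 0 :=
  K0_torsionFree_general T B hB
end

section
/- Let X be a compact metric space, T a homeomorphism of X, and f, g ∈ C(X,ℤ) with k f = g ∘ T − g for some integer k > 0. Writing g = k h + q with h, q ∈ C(X,ℤ) and 0 ≤ q < k pointwise, one has q ∘ T − q = 0 and f = h ∘ T − h. -/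
/-- If `k f = g ∘ T - g` with `k > 0`, and `g = k h + q` with
`0 ≤ q < k` pointwise, then `q ∘ T - q = 0` and `f = h ∘ T - h`. -/
theorem coboundary_div_rem {X : Type*} [MetricSpace X] [CompactSpace X]
    (T : X ≃ₜ X) (f g h q : C(X, ℤ)) (k : ℤ) (hk : 0 < k)
    (hfg : k • f = g.comp (T : C(X, X)) - g)
    (hg : g = k • h + q) (hq : ∀ x : X, 0 ≤ q x ∧ q x < k) :
    q.comp (T : C(X, X)) - q = 0 ∧ f = h.comp (T : C(X, X)) - h := by
  have key : ∀ x : X, q (T x) - q x = 0 ∧ f x = h (T x) - h x := by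
    intro x
    have e1 := congrArg (fun F : C(X, ℤ) => F x) hfg
    have e2 := congrArg (fun F : C(X, ℤ) => F x) hg
    have e3 := congrArg (fun F : C(X, ℤ) => F (T x)) hg
    simp only [ContinuousMap.smul_apply, ContinuousMap.sub_apply, ContinuousMap.add_apply,
      ContinuousMap.comp_apply, ContinuousMap.coe_coe, smul_eq_mul] at e1 e2 e3
    obtain ⟨hq1, hq2⟩ := hq x
    obtain ⟨hq3, hq4⟩ := hq (T x)
    set m : ℤ := f x - h (T x) + h x with hm
    have e4 : q (T x) - q x = k * m := by rw [hm]; linarith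
    have hm0 : m = 0 := by
      rcases lt_trichotomy m 0 with hc | hc | hc
      · nlinarith
      · exact hc
      · nlinarith
    constructor
    · rw [e4, hm0, mul_zero]
    · have : k * m = 0 := by rw [hm0, mul_zero]
      rw [hm] at this
      have hk' : k ≠ 0 := hk.ne'
      rcases mul_eq_zero.mp this with h | h
      · exact absurd h hk'
      · linarith
  constructor
  · ext x
    have := (key x).1
    simp only [ContinuousMap.sub_apply, ContinuousMap.comp_apply,
      ContinuousMap.coe_coe, ContinuousMap.zero_apply]
    linarith
  · ext x
    have := (key x).2
    simp only [ContinuousMap.sub_apply, ContinuousMap.comp_apply,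
      ContinuousMap.coe_coe]
    linarith
end

section
/- Let X and Y be Cantor spaces (compact, metrizable, totally disconnected, perfect) and p : X → Y a continuous surjection. Define X²_p = {(x₁,x₂) ∈ X² : p(x₁) = p(x₂)} and ∂₁ : C(X,ℤ) → C(X²_p,ℤ) by ∂₁f(x₁,x₂) = f(x₂) − f(x₁). Then the kernel of ∂₁ equals the image of p* : C(Y,ℤ) → C(X,ℤ), f ↦ f ∘ p. -/
/-- For Cantor spaces `X`, `Y` and a continuous surjection `p : X → Y`,
the kernel of `∂₁ : C(X,ℤ) → C(X²_p,ℤ)`, `∂₁ f (x₁,x₂) = f x₂ - f x₁`, equals the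
image of `p* : C(Y,ℤ) → C(X,ℤ)`. -/
theorem ker_del1_eq_range_pstar {X Y : Type*}
    [TopologicalSpace X] [CompactSpace X] [TopologicalSpace.MetrizableSpace X]
    [TotallyDisconnectedSpace X] [PerfectSpace X] [Nonempty X]
    [TopologicalSpace Y] [CompactSpace Y] [TopologicalSpace.MetrizableSpace Y]
    [TotallyDisconnectedSpace Y] [PerfectSpace Y] [Nonempty Y]
    (p : C(X, Y)) (hps : Function.Surjective p) (f : C(X, ℤ)) :
    (∀ z : {v : X × X // p v.1 = p v.2}, f z.1.2 - f z.1.1 = 0) ↔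
      ∃ g : C(Y, ℤ), f = g.comp p := by
  constructor
  · intro h
    haveI : T2Space Y := TopologicalSpace.t2Space_of_metrizableSpace
    have hq : Topology.IsQuotientMap p := (p.continuous.isClosedMap).isQuotientMap p.continuous hps
    -- define g on Y using choice of preimages
    set g0 : Y → ℤ := fun y => f (hps y).choose with hg0
    have hcomp : ∀ x, g0 (p x) = f x := by
      intro x
      have hx : p (hps (p x)).choose = p x := (hps (p x)).choose_spec
      have := h ⟨((hps (p x)).choose, x), hx⟩
      simpa [hg0] using by linarith [this]
    have hcont : Continuous g0 := by
      rw [hq.continuous_iff]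
      have : g0 ∘ p = f := funext hcomp
      rw [this]; exact f.continuous
    exact ⟨⟨g0, hcont⟩, by ext x; exact (hcomp x).symm⟩
  · rintro ⟨g, rfl⟩ z
    simp [z.2]
end

section
/- Let X and Y be Cantor spaces, p : X → Y continuous and onto. For n ≥ 1 let Xⁿ_p = {(x₁,…,xₙ) ∈ Xⁿ : p(x₁) = ⋯ = p(xₙ)}, with X⁰_p = Y by convention, and define ∂ₙ : C(Xⁿ_p,ℤ) → C(Xⁿ⁺¹_p,ℤ) by ∂ₙf(x₁,…,x_{n+1}) = Σ_{j=1}^{n+1} (−1)^{j+1} f(x₁,…,x̂ⱼ,…,x_{n+1}) and ∂₀ = p*. Then for every n ≥ 0 one has ∂_{n+1} ∘ ∂ₙ = 0, and the sequence 0 → C(Y,ℤ) → C(X,ℤ) → C(X²_p,ℤ) → C(X³_p,ℤ) → ⋯ is exact. -/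
variable {X Y : Type*} [TopologicalSpace X] [TopologicalSpace Y]

/-- The `n`-th relative cartesian power `Xⁿ_p` of `X` with respect to `p : X → Y`. -/
abbrev FiberPow (p : X → Y) (n : ℕ) : Type _ :=
  {v : Fin n → X // ∀ i j, p (v i) = p (v j)}

/-- The map `Xⁿ⁺¹_p → Xⁿ_p` omitting the `j`-th coordinate. -/
def omitMap (p : X → Y) (n : ℕ) (j : Fin (n + 1)) (v : FiberPow p (n + 1)) :
    FiberPow p n :=
  ⟨fun i => v.1 (j.succAbove i), fun i k => v.2 _ _⟩

lemma continuous_omitMap (p : X → Y) (n : ℕ) (j : Fin (n + 1)) :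
    Continuous (omitMap p n j) := by
  unfold omitMap
  refine Continuous.subtype_mk ?_ _
  exact continuous_pi fun i =>
    (continuous_apply (j.succAbove i)).comp continuous_subtype_val

/-- The simplicial differential
`∂ₙ f (x₁,…,x_{n+1}) = ∑_j (−1)^{j+1} f(x₁,…,x̂ⱼ,…,x_{n+1})` (0-indexed signs). -/
noncomputable def del (p : X → Y) (n : ℕ) (f : C(FiberPow p n, ℤ)) :
    C(FiberPow p (n + 1), ℤ) :=
  ⟨fun v => ∑ j : Fin (n + 1), (-1) ^ (j : ℕ) * f (omitMap p n j v), by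
    apply continuous_finset_sum
    intro j _
    exact continuous_const.mul (f.continuous.comp (continuous_omitMap p n j))⟩

/-- The projection `X¹_p → Y`. -/
def projY (p : C(X, Y)) : C(FiberPow (⇑p) 1, Y) :=
  ⟨fun v => p (v.1 0), p.continuous.comp ((continuous_apply _).comp continuous_subtype_val)⟩

section Comb

lemma val_sa {m : ℕ} (j : Fin (m + 1)) (t : Fin m) :
    ((j.succAbove t : Fin (m + 1)) : ℕ) = if (t : ℕ) < (j : ℕ) then (t : ℕ) else (t : ℕ) + 1 := by
  unfold Fin.succAbove
  split_ifs with h1 h2 h2 <;>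
    simp_all [Fin.lt_def, Fin.coe_castSucc, Fin.val_succ]

lemma sa_sa {m : ℕ} (j : Fin (m + 2)) (i : Fin (m + 1)) (h : (i : ℕ) < (j : ℕ)) (k : Fin m) :
    j.succAbove (i.succAbove k) =
      (Fin.castSucc i).succAbove ((j.pred (by rintro rfl; simp at h)).succAbove k) := by
  apply Fin.ext
  simp only [val_sa, Fin.coe_castSucc, Fin.coe_pred]
  have hj : 1 ≤ (j : ℕ) := by omega
  split_ifs <;> omega

variable {A B : Type*}

def Dfun (q : A → B) (n : ℕ) (F : FiberPow q n → ℤ) : FiberPow q (n + 1) → ℤ :=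
  fun v => ∑ j : Fin (n + 1), (-1) ^ (j : ℕ) * F (omitMap q n j v)

lemma omit_omit (q : A → B) (n : ℕ) (j : Fin (n + 2)) (i : Fin (n + 1))
    (v : FiberPow q (n + 2)) :
    omitMap q n i (omitMap q (n + 1) j v) = ⟨fun k => v.1 (j.succAbove (i.succAbove k)),
      fun k l => v.2 _ _⟩ := rfl

lemma dd_zero (q : A → B) (n : ℕ) (F : FiberPow q n → ℤ) :
    Dfun q (n + 1) (Dfun q n F) = 0 := by
  funext v
  show (∑ j : Fin (n + 2), (-1) ^ (j : ℕ) * Dfun q n F (omitMap q (n + 1) j v)) = 0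
  simp only [Dfun, Finset.mul_sum]
  rw [← Finset.sum_product']
  set f : Fin (n + 2) × Fin (n + 1) → ℤ := fun ji =>
    (-1) ^ (ji.1 : ℕ) * ((-1) ^ (ji.2 : ℕ) *
      F (omitMap q n ji.2 (omitMap q (n + 1) ji.1 v))) with hf
  show ∑ ji : Fin (n + 2) × Fin (n + 1), f ji = 0
  have key : ∀ (j : Fin (n+2)) (i : Fin (n+1)), (i : ℕ) < (j : ℕ) →
      ∀ (hj : j ≠ 0),
      f (j, i) + f (i.castSucc, j.pred hj) = 0 := by
    rintro j i h hj
    have harg : omitMap q n i (omitMap q (n + 1) j v)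
        = omitMap q n (j.pred hj) (omitMap q (n + 1) i.castSucc v) := by
      rw [omit_omit, omit_omit]
      exact Subtype.ext (funext fun k => congrArg v.1 (sa_sa j i h k))
    have hjv : (j : ℕ) = ((j.pred hj : ℕ)) + 1 := by
      simp [Fin.coe_pred]; omega
    simp only [hf, harg, Fin.coe_castSucc, hjv, pow_succ]
    ring
  set g : ∀ ji : Fin (n + 2) × Fin (n + 1), ji ∈ (Finset.univ : Finset (Fin (n+2) × Fin (n+1)))
      → Fin (n + 2) × Fin (n + 1) := fun ji _ =>
    if h : (ji.2 : ℕ) < (ji.1 : ℕ)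
      then (ji.2.castSucc, ji.1.pred (by intro hz; rw [hz] at h; simp at h))
      else (ji.2.succ, ⟨(ji.1 : ℕ), by omega⟩) with hg
  apply Finset.sum_involution g
  · rintro ⟨j, i⟩ -
    simp only [hg]
    split_ifs with h
    · exact key j i h _
    · push_neg at h
      set I : Fin (n+1) := ⟨(j:ℕ), by omega⟩ with hI
      have h2 : (I : ℕ) < ((i.succ : Fin (n+2)) : ℕ) := by simp [hI]; omega
      have hJ : (i.succ : Fin (n+2)) ≠ 0 := by
        intro hc; have := congrArg (Fin.val) hc; simp at this
      have harg : omitMap q n I (omitMap q (n + 1) i.succ v)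
          = omitMap q n i (omitMap q (n + 1) j v) := by
        rw [omit_omit, omit_omit]
        refine Subtype.ext (funext fun k => congrArg v.1 ?_)
        have := sa_sa i.succ I h2 k
        rw [this]
        have e1 : I.castSucc = j := by apply Fin.ext; simp [hI]
        have e2 : (i.succ : Fin (n+2)).pred hJ = i := by simp
        rw [e1, e2]
      have hIj : (I : ℕ) = (j : ℕ) := by simp [hI]
      simp only [hf, harg, Fin.val_succ, hIj, pow_succ]
      ring
  · rintro ⟨j, i⟩ - -
    simp only [hg]
    split_ifs with h
    · intro hc
      have := congrArg (fun x => (x.1 : ℕ)) hc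
      simp at this; omega
    · intro hc
      have := congrArg (fun x => (x.1 : ℕ)) hc
      simp at this; omega
  · rintro ⟨j, i⟩ -
    simp only [hg]
    split_ifs with h h2 h2
    · exfalso; simp [Fin.lt_def] at h2; omega
    · apply Prod.ext <;> apply Fin.ext <;> simp_all
    · apply Prod.ext <;> apply Fin.ext <;> simp_all <;> omega
    · exfalso; simp [Fin.lt_def] at h2; omega
  · rintro ⟨j, i⟩ -
    exact Finset.mem_univ _

def consFP {A B : Type*} {q : A → B} {n : ℕ} (a : A) (t : FiberPow q (n + 1))
    (ha : q a = q (t.1 0)) : FiberPow q (n + 2) :=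
  ⟨Fin.cons a t.1, by
    have key : ∀ k : Fin (n + 2), q ((Fin.cons a t.1 : Fin (n+2) → A) k) = q (t.1 0) := by
      intro k
      refine Fin.cases ?_ ?_ k
      · simpa using ha
      · intro k'; simpa using t.2 k' 0
    intro k l
    rw [key k, key l]⟩

lemma head_class {A B : Type*} {q : A → B} {n : ℕ} (t : FiberPow q (n + 2)) (j : Fin (n + 2)) :
    q ((omitMap q (n + 1) j t).1 0) = q (t.1 0) := t.2 _ _

lemma omit_zero_cons {A B : Type*} {q : A → B} {n : ℕ} (a : A) (t : FiberPow q (n + 1))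
    (ha : q a = q (t.1 0)) : omitMap q (n + 1) 0 (consFP a t ha) = t := by
  refine Subtype.ext (funext fun k => ?_)
  show (Fin.cons a t.1 : Fin (n+2) → A) ((0 : Fin (n+2)).succAbove k) = t.1 k
  rw [Fin.succAbove_zero, Fin.cons_succ]

lemma omit_succ_cons {A B : Type*} {q : A → B} {n : ℕ} (a : A) (t : FiberPow q (n + 2))
    (ha : q a = q (t.1 0)) (j : Fin (n + 2)) :
    omitMap q (n + 2) j.succ (consFP a t ha)
      = consFP a (omitMap q (n + 1) j t) (by rw [head_class t j]; exact ha) := by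
  refine Subtype.ext (funext fun k => ?_)
  show (Fin.cons a t.1 : Fin (n+3) → A) (j.succ.succAbove k)
      = (Fin.cons a (omitMap q (n+1) j t).1 : Fin (n+2) → A) k
  refine Fin.cases ?_ ?_ k
  · have h0 : j.succ.succAbove 0 = 0 := by
      apply Fin.ext; rw [val_sa]; simp
    rw [h0]
    simp
  · intro k'
    rw [Fin.succ_succAbove_succ, Fin.cons_succ, Fin.cons_succ]
    rfl

lemma exact_comb {A B : Type*} (q : A → B) (s : B → A) (hs : ∀ a, q (s (q a)) = q a) (n : ℕ)
    (F : FiberPow q (n + 2) → ℤ) (hF : Dfun q (n + 2) F = 0) :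
    Dfun q (n + 1)
      (fun t => F (consFP (s (q (t.1 0))) t (by rw [hs]))) = F := by
  funext t
  set a : A := s (q (t.1 0)) with haa
  have haq : q a = q (t.1 0) := by rw [haa, hs]
  set T : FiberPow q (n + 3) := consFP a t haq with hT
  have h0 : (0 : ℤ) = Dfun q (n + 2) F T := by rw [hF]; rfl
  rw [Dfun, Fin.sum_univ_succ] at h0
  have e0 : omitMap q (n + 2) 0 T = t := omit_zero_cons a t haq
  have hD : ∀ j : Fin (n + 2), omitMap q (n + 2) j.succ T
      = consFP (s (q ((omitMap q (n + 1) j t).1 0))) (omitMap q (n + 1) j t)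
          (by rw [hs]) := by
    intro j
    have h1 := omit_succ_cons a t haq j
    rw [hT, h1]
    refine Subtype.ext ?_
    show (Fin.cons a (omitMap q (n+1) j t).1 : Fin (n+2) → A)
        = Fin.cons (s (q ((omitMap q (n + 1) j t).1 0))) (omitMap q (n+1) j t).1
    have hhead : s (q ((omitMap q (n+1) j t).1 0)) = a := by
      rw [haa]; exact congrArg s (head_class t j)
    rw [hhead]
  have hD2 : Dfun q (n + 1) (fun u => F (consFP (s (q (u.1 0))) u (by rw [hs]))) t
      = ∑ j : Fin (n + 2), (-1) ^ (j : ℕ) * F (omitMap q (n + 2) j.succ T) := by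
    refine Finset.sum_congr rfl fun j _ => ?_
    rw [hD j]
  rw [hD2]
  simp only [e0, Fin.val_succ, pow_succ, Fin.val_zero, pow_zero, one_mul] at h0
  have : ∑ j : Fin (n + 2), (-1) ^ (j : ℕ) * F (omitMap q (n + 2) j.succ T)
      = - ∑ j : Fin (n + 2), (-1) ^ (j : ℕ) * -1 * F (omitMap q (n + 2) j.succ T) := by
    rw [← Finset.sum_neg_distrib]
    exact Finset.sum_congr rfl fun j _ => by ring
  rw [this]
  linarith [h0]

lemma exact_comb_bot {A B : Type*} (q : A → B) (s : B → A) (hs : ∀ a, q (s (q a)) = q a)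
    (F : FiberPow q 1 → ℤ) (hF : Dfun q 1 F = 0) (t : FiberPow q 1) :
    F t = F ⟨fun _ => s (q (t.1 0)), fun _ _ => rfl⟩ := by
  set T : FiberPow q 2 := consFP (s (q (t.1 0))) t (hs _) with hT
  have h0 : (0 : ℤ) = Dfun q 1 F T := by rw [hF]; rfl
  rw [Dfun, Fin.sum_univ_succ, Fin.sum_univ_succ] at h0
  have e0 : omitMap q 1 0 T = t := omit_zero_cons _ t (hs _)
  have e1 : omitMap q 1 (Fin.succ 0) T = ⟨fun _ => s (q (t.1 0)), fun _ _ => rfl⟩ := by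
    refine Subtype.ext (funext fun k => ?_)
    have hk : k = 0 := Subsingleton.elim k 0
    subst hk
    show T.1 ((Fin.succ 0 : Fin 2).succAbove 0) = s (q (t.1 0))
    have : (Fin.succ 0 : Fin 2).succAbove 0 = 0 := by decide
    rw [this, hT]
    rfl
  rw [e0, e1] at h0
  simp at h0
  linarith [h0]

end Comb

section Topo

lemma fiberPow_compactSpace [CompactSpace X] [T2Space Y] (p : C(X, Y)) (m : ℕ) :
    CompactSpace (FiberPow (⇑p) m) := by
  have hset : {v : Fin m → X | ∀ i j, (p (v i) : Y) = p (v j)}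
      = ⋂ i, ⋂ j, {v : Fin m → X | (p (v i) : Y) = p (v j)} := by
    ext v; simp [Set.mem_iInter]
  have hclosed : IsClosed {v : Fin m → X | ∀ i j, (p (v i) : Y) = p (v j)} := by
    rw [hset]
    exact isClosed_iInter fun i => isClosed_iInter fun j =>
      isClosed_eq ((map_continuous p).comp (continuous_apply i))
        ((map_continuous p).comp (continuous_apply j))
  exact isCompact_iff_compactSpace.mp hclosed.isCompact

lemma isOpen_mem_iff {Z : Type*} [TopologicalSpace Z] {φ : Z → X} (hφ : Continuous φ)
    {s : Set X} (hs : IsClopen s) (c : Prop) : IsOpen {z | φ z ∈ s ↔ c} := by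
  by_cases h : c
  · have he : {z | φ z ∈ s ↔ c} = φ ⁻¹' s := by ext z; simp [h]
    rw [he]; exact hs.2.preimage hφ
  · have he : {z | φ z ∈ s ↔ c} = φ ⁻¹' sᶜ := by ext z; simp [h]
    rw [he]; exact hs.compl.2.preimage hφ

lemma continuous_of_pattern [CompactSpace X] [T2Space Y] (p : C(X, Y)) {M : ℕ}
    (S : Finset (Set X)) (T : Finset (Set Y))
    (hS : ∀ s ∈ S, IsClopen s) (hT : ∀ t ∈ T, IsClopen t)
    (g : FiberPow (⇑p) M → ℤ)
    (hg : ∀ v w : FiberPow (⇑p) M,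
      (∀ k, (∀ s ∈ S, (v.1 k ∈ s ↔ w.1 k ∈ s)) ∧
        (∀ t ∈ T, (p (v.1 k) ∈ t ↔ p (w.1 k) ∈ t))) → g v = g w) :
    Continuous g := by
  have hlc : IsLocallyConstant g := by
    rw [IsLocallyConstant.iff_exists_open]
    intro v
    refine ⟨⋂ (k : Fin M),
      ((⋂ s ∈ (S : Set (Set X)), {w : FiberPow (⇑p) M | w.1 k ∈ s ↔ v.1 k ∈ s}) ∩
       (⋂ t ∈ (T : Set (Set Y)), {w : FiberPow (⇑p) M | p (w.1 k) ∈ t ↔ p (v.1 k) ∈ t})),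
      ?_, ?_, ?_⟩
    · refine isOpen_iInter_of_finite fun k => IsOpen.inter ?_ ?_
      · refine (S.finite_toSet).isOpen_biInter fun s hs => ?_
        exact isOpen_mem_iff ((continuous_apply k).comp continuous_subtype_val) (hS s hs) _
      · refine (T.finite_toSet).isOpen_biInter fun t ht => ?_
        exact isOpen_mem_iff ((map_continuous p).comp
          ((continuous_apply k).comp continuous_subtype_val)) (hT t ht) _
    · simp
    · intro w hw
      simp only [Set.mem_iInter, Set.mem_inter_iff, Set.mem_setOf_eq] at hw
      exact hg w v fun k => ⟨fun s hs => (hw k).1 s hs, fun t ht => (hw k).2 t ht⟩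
  exact hlc.continuous

lemma exists_pattern_family [CompactSpace X] [T2Space X] [TotallyDisconnectedSpace X]
    [T2Space Y] (p : C(X, Y)) (m : ℕ) (f : C(FiberPow (⇑p) m, ℤ)) :
    ∃ S : Finset (Set X), (∀ s ∈ S, IsClopen s) ∧
      ∀ v w : FiberPow (⇑p) m,
        (∀ k : Fin m, ∀ s ∈ S, (v.1 k ∈ s ↔ w.1 k ∈ s)) → f v = f w := by
  classical
  haveI := fiberPow_compactSpace p m
  have step : ∀ v : FiberPow (⇑p) m, ∃ W : Fin m → Set X,
      (∀ i, IsClopen (W i)) ∧ (∀ i, v.1 i ∈ W i) ∧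
      ∀ w : FiberPow (⇑p) m, (∀ i, w.1 i ∈ W i) → f w = f v := by
    intro v
    have hopen : IsOpen (⇑f ⁻¹' {f v}) :=
      (isOpen_discrete _).preimage (map_continuous f)
    rcases isOpen_induced_iff.mp hopen with ⟨U, hU, hUeq⟩
    have hvU : v.1 ∈ U := by
      have : v ∈ Subtype.val ⁻¹' U := by rw [hUeq]; exact rfl
      exact this
    rcases (isOpen_pi_iff.mp hU) v.1 hvU with ⟨I, u, hu, hsub⟩
    have hWex : ∀ i : Fin m, ∃ V : Set X, IsClopen V ∧ v.1 i ∈ V ∧ (i ∈ I → V ⊆ u i) := by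
      intro i
      by_cases h : i ∈ I
      · rcases compact_exists_isClopen_in_isOpen (hu i h).1 (hu i h).2 with ⟨V, h1, h2, h3⟩
        exact ⟨V, h1, h2, fun _ => h3⟩
      · exact ⟨Set.univ, isClopen_univ, trivial, fun hc => absurd hc h⟩
    choose W hW1 hW2 hW3 using hWex
    refine ⟨W, hW1, hW2, fun w hw => ?_⟩
    have hwU : w.1 ∈ U := by
      apply hsub
      intro i hi
      exact hW3 i hi (hw i)
    have : w ∈ Subtype.val ⁻¹' U := hwU
    rw [hUeq] at this
    simpa using this
  choose W hW1 hW2 hW3 using step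
  have hcover : (Set.univ : Set (FiberPow (⇑p) m)) ⊆
      ⋃ v : FiberPow (⇑p) m, {w : FiberPow (⇑p) m | ∀ i, w.1 i ∈ W v i} := by
    intro w _
    exact Set.mem_iUnion.mpr ⟨w, fun i => hW2 w i⟩
  have hopen : ∀ v : FiberPow (⇑p) m,
      IsOpen {w : FiberPow (⇑p) m | ∀ i, w.1 i ∈ W v i} := by
    intro v
    have he : {w : FiberPow (⇑p) m | ∀ i, w.1 i ∈ W v i}
        = ⋂ i, (fun w : FiberPow (⇑p) m => w.1 i) ⁻¹' (W v i) := by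
      ext w; simp [Set.mem_iInter]
    rw [he]
    exact isOpen_iInter_of_finite fun i =>
      ((hW1 v i).2).preimage ((continuous_apply i).comp continuous_subtype_val)
  obtain ⟨τ, hτ⟩ := isCompact_univ.elim_finite_subcover _ hopen hcover
  refine ⟨τ.biUnion (fun v => Finset.univ.image (W v)), ?_, ?_⟩
  · intro s hs
    simp only [Finset.mem_biUnion, Finset.mem_image, Finset.mem_univ] at hs
    obtain ⟨v, _, i, _, rfl⟩ := hs
    exact hW1 v i
  · intro v w hvw
    obtain ⟨c, hcmem, hc⟩ := Set.mem_iUnion₂.mp (hτ (Set.mem_univ w))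
    have hv : ∀ i, v.1 i ∈ W c i := by
      intro i
      have : W c i ∈ τ.biUnion (fun v => Finset.univ.image (W v)) := by
        simp only [Finset.mem_biUnion, Finset.mem_image, Finset.mem_univ]
        exact ⟨c, hcmem, i, trivial, rfl⟩
      exact (hvw i _ this).mpr (hc i)
    rw [hW3 c v hv, hW3 c w hc]

lemma main_achieve [CompactSpace X] [T2Space X] [CompactSpace Y] [T2Space Y]
    [TotallyDisconnectedSpace Y] [Nonempty Y]
    (p : C(X, Y)) (S : Finset (Set X)) (hS : ∀ s ∈ S, IsClopen s) (m : ℕ) :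
    ∃ T : Finset (Set Y), (∀ t ∈ T, IsClopen t) ∧
      ∀ x : Fin m → X, (∀ k l : Fin m, ∀ t ∈ T, ((p (x k) : Y) ∈ t ↔ p (x l) ∈ t)) →
        ∃ v : FiberPow (⇑p) m, ∀ k : Fin m, ∀ s ∈ S, (v.1 k ∈ s ↔ x k ∈ s) := by
  classical
  set K : (↥S → Prop) → Set X := fun σ => {x | ∀ s : ↥S, x ∈ (s : Set X) ↔ σ s} with hK
  have hKclosed : ∀ σ, IsClosed (K σ) := by
    intro σ
    have he : K σ = ⋂ s : ↥S, {x | x ∈ (s : Set X) ↔ σ s} := by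
      ext x; simp [hK, Set.mem_iInter]
    rw [he]
    refine isClosed_iInter fun s => ?_
    by_cases h : σ s
    · have : {x | x ∈ (s : Set X) ↔ σ s} = (s : Set X) := by ext x; simp [h]
      rw [this]; exact (hS s s.2).1
    · have : {x | x ∈ (s : Set X) ↔ σ s} = (s : Set X)ᶜ := by ext x; simp [h]
      rw [this]; exact (hS s s.2).compl.1
  set D : (Fin m → ↥S → Prop) → Fin m → Set Y := fun τ k => ⇑p '' (K (τ k)) with hD
  have hDclosed : ∀ τ k, IsClosed (D τ k) := fun τ k =>
    (((hKclosed (τ k)).isCompact).image (map_continuous p)).isClosed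
  have hVex : ∀ τ : Fin m → ↥S → Prop, ∃ V : Finset (Set Y),
      (∀ u ∈ V, IsClopen u ∧ ∃ k, u ∩ D τ k = ∅) ∧
      ((⋂ k, D τ k) = ∅ → ∀ y : Y, ∃ u ∈ V, y ∈ u) := by
    intro τ
    by_cases hgood : (⋂ k, D τ k) = ∅
    · have hy : ∀ y : Y, ∃ u : Set Y, IsClopen u ∧ y ∈ u ∧ ∃ k, u ∩ D τ k = ∅ := by
        intro y
        have : ∃ k, y ∉ D τ k := by
          by_contra hc
          push_neg at hc
          have : y ∈ ⋂ k, D τ k := Set.mem_iInter.mpr hc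
          rw [hgood] at this
          exact this
        obtain ⟨k, hk⟩ := this
        obtain ⟨u, hu1, hu2, hu3⟩ := compact_exists_isClopen_in_isOpen
          (hDclosed τ k).isOpen_compl hk
        exact ⟨u, hu1, hu2, k, by
          rw [Set.eq_empty_iff_forall_notMem]
          rintro z ⟨hz1, hz2⟩
          exact (hu3 hz1) hz2⟩
      choose V hV1 hV2 hV3 using hy
      have hcov : (Set.univ : Set Y) ⊆ ⋃ y : Y, V y := fun y _ =>
        Set.mem_iUnion.mpr ⟨y, hV2 y⟩
      obtain ⟨t, ht⟩ := isCompact_univ.elim_finite_subcover V (fun y => (hV1 y).2) hcov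
      refine ⟨t.image V, ?_, fun _ y => ?_⟩
      · intro u hu
        obtain ⟨y, _, rfl⟩ := Finset.mem_image.mp hu
        exact ⟨hV1 y, hV3 y⟩
      · obtain ⟨c, hc1, hc2⟩ := Set.mem_iUnion₂.mp (ht (Set.mem_univ y))
        exact ⟨V c, Finset.mem_image_of_mem V hc1, hc2⟩
    · exact ⟨∅, by simp, fun hc => absurd hc hgood⟩
  choose Vfam hV1 hV2 using hVex
  haveI : Fintype (Fin m → ↥S → Prop) := Fintype.ofFinite _
  refine ⟨Finset.univ.biUnion Vfam, ?_, ?_⟩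
  · intro u hu
    obtain ⟨τ, _, hu2⟩ := Finset.mem_biUnion.mp hu
    exact (hV1 τ u hu2).1
  · intro x hx
    set τ : Fin m → ↥S → Prop := fun k s => x k ∈ (s : Set X) with hτ
    by_cases hgood : (⋂ k, D τ k) = ∅
    · exfalso
      haveI hne : Nonempty (Fin m) := by
        by_contra hc
        haveI : IsEmpty (Fin m) := not_nonempty_iff.mp hc
        rw [Set.iInter_of_empty] at hgood
        exact (Set.univ_eq_empty_iff.mp hgood).elim (Classical.arbitrary Y)
      obtain ⟨k0⟩ := hne
      obtain ⟨u, hu1, hu2⟩ := hV2 τ hgood (p (x k0))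
      have humem : u ∈ Finset.univ.biUnion Vfam :=
        Finset.mem_biUnion.mpr ⟨τ, Finset.mem_univ _, hu1⟩
      obtain ⟨k1, hk1⟩ := (hV1 τ u hu1).2
      have hx1 : (p (x k1) : Y) ∈ u := (hx k0 k1 u humem).mp hu2
      have hx2 : (p (x k1) : Y) ∈ D τ k1 :=
        Set.mem_image_of_mem _ (by intro s; exact Iff.rfl)
      have : (p (x k1) : Y) ∈ u ∩ D τ k1 := ⟨hx1, hx2⟩
      rw [hk1] at this
      exact this
    · obtain ⟨y, hy⟩ := Set.nonempty_iff_ne_empty.mpr hgood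
      have hy' : ∀ k, y ∈ D τ k := Set.mem_iInter.mp hy
      have hz : ∀ k, ∃ z : X, z ∈ K (τ k) ∧ (p z : Y) = y := by
        intro k
        obtain ⟨z, hz1, hz2⟩ := hy' k
        exact ⟨z, hz1, hz2⟩
      choose z hz1 hz2 using hz
      refine ⟨⟨z, fun i j => by rw [hz2 i, hz2 j]⟩, ?_⟩
      intro k s hs
      exact (hz1 k ⟨s, hs⟩)

lemma continuous_of_patternY (T : Finset (Set Y)) (hT : ∀ t ∈ T, IsClopen t)
    (g : Y → ℤ) (hg : ∀ y y' : Y, (∀ t ∈ T, (y ∈ t ↔ y' ∈ t)) → g y = g y') :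
    Continuous g := by
  have hlc : IsLocallyConstant g := by
    rw [IsLocallyConstant.iff_exists_open]
    intro y
    refine ⟨⋂ t ∈ (T : Set (Set Y)), {z : Y | z ∈ t ↔ y ∈ t}, ?_, ?_, ?_⟩
    · refine (T.finite_toSet).isOpen_biInter fun t ht => ?_
      exact isOpen_mem_iff continuous_id (hT t ht) _
    · simp
    · intro z hz
      simp only [Set.mem_iInter, Set.mem_setOf_eq] at hz
      exact hg z y fun t ht => hz t ht
  exact hlc.continuous

end Topo


/-- for a continuous surjection `p` between Cantor spaces, the sequence
`0 → C(Y,ℤ) → C(X,ℤ) → C(X²_p,ℤ) → C(X³_p,ℤ) → ⋯` with the simplicial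
differentials is exact, and `∂_{n+1} ∘ ∂ₙ = 0` for all `n ≥ 0`. -/
theorem exact_simplicial_sequence
    [CompactSpace X] [TopologicalSpace.MetrizableSpace X]
    [TotallyDisconnectedSpace X] [PerfectSpace X] [Nonempty X]
    [CompactSpace Y] [TopologicalSpace.MetrizableSpace Y]
    [TotallyDisconnectedSpace Y] [PerfectSpace Y] [Nonempty Y]
    (p : C(X, Y)) (hps : Function.Surjective p) :
    -- `∂₀ = p*` is injective
    (Function.Injective fun g : C(Y, ℤ) => g.comp (projY p)) ∧
    -- `∂₁ ∘ ∂₀ = 0`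
    (∀ g : C(Y, ℤ), del (⇑p) 1 (g.comp (projY p)) = 0) ∧
    -- `∂_{n+1} ∘ ∂ₙ = 0` for `n ≥ 1`
    (∀ n : ℕ, 1 ≤ n → ∀ f : C(FiberPow (⇑p) n, ℤ),
      del (⇑p) (n + 1) (del (⇑p) n f) = 0) ∧
    -- exactness at `C(X,ℤ) = C(X¹_p,ℤ)`: `ker ∂₁ = range ∂₀`
    (∀ f : C(FiberPow (⇑p) 1, ℤ),
      del (⇑p) 1 f = 0 ↔ ∃ g : C(Y, ℤ), f = g.comp (projY p)) ∧
    -- exactness at `C(Xⁿ⁺¹_p,ℤ)` for `n ≥ 1`: `ker ∂_{n+1} = range ∂ₙ`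
    (∀ n : ℕ, 1 ≤ n → ∀ f : C(FiberPow (⇑p) (n + 1), ℤ),
      del (⇑p) (n + 1) f = 0 ↔ ∃ g : C(FiberPow (⇑p) n, ℤ), f = del (⇑p) n g) := by
  classical
  have part2 : ∀ g : C(Y, ℤ), del (⇑p) 1 (g.comp (projY p)) = 0 := by
    intro g
    ext v
    show (∑ j : Fin 2, (-1) ^ (j : ℕ) * (g.comp (projY p)) (omitMap (⇑p) 1 j v)) = 0
    have key : ∀ j : Fin 2, (g.comp (projY p)) (omitMap (⇑p) 1 j v) = g (p (v.1 0)) := by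
      intro j
      show g (p ((omitMap (⇑p) 1 j v).1 0)) = g (p (v.1 0))
      exact congrArg g (v.2 _ _)
    simp [Fin.sum_univ_succ, key]
  have part3 : ∀ n : ℕ, ∀ f : C(FiberPow (⇑p) n, ℤ),
      del (⇑p) (n + 1) (del (⇑p) n f) = 0 := by
    intro n f
    ext v
    exact congrFun (dd_zero (⇑p) n ⇑f) v
  refine ⟨?_, part2, fun n _ f => part3 n f, ?_, ?_⟩
  · intro g₁ g₂ hgg
    ext y
    obtain ⟨x, hx⟩ := hps y
    have h2 := ContinuousMap.congr_fun hgg (⟨fun _ => x, fun _ _ => rfl⟩ : FiberPow (⇑p) 1)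
    simpa [projY, hx] using h2
  · -- exactness at C(X) 
    intro f
    constructor
    · intro hdel
      obtain ⟨S, hS1, hS2⟩ := exists_pattern_family p 1 f
      obtain ⟨T, hT1, hT2⟩ := main_achieve p S hS1 2
      set q : X → (↥T → Prop) := fun x t => (p x : Y) ∈ (t : Set Y) with hq
      have hsec : ∃ s : (↥T → Prop) → X, ∀ a : X, q (s (q a)) = q a := by
        refine ⟨fun b => if h : ∃ a, q a = b then h.choose else Classical.arbitrary X,
          fun a => ?_⟩
        have h : ∃ a', q a' = q a := ⟨a, rfl⟩
        simp only [dif_pos h]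
        exact h.choose_spec
      obtain ⟨s, hs⟩ := hsec
      set F : FiberPow q 1 → ℤ := fun t => f ⟨fun _ => t.1 0, fun _ _ => rfl⟩ with hF
      have hFf : ∀ (t : FiberPow q 1) (w : FiberPow (⇑p) 1),
          (∀ s' ∈ S, (t.1 0 ∈ s' ↔ w.1 0 ∈ s')) → F t = f w := by
        intro t w h
        refine hS2 _ _ fun k s' hs' => ?_
        have hk : k = 0 := Subsingleton.elim k 0
        subst hk
        exact h s' hs'
      have hFc : Dfun q 1 F = 0 := by
        funext t
        obtain ⟨v, hv⟩ := hT2 t.1 (fun k l u hu => iff_of_eq (congrFun (t.2 k l) ⟨u, hu⟩))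
        have hterm : ∀ j : Fin 2, F (omitMap q 1 j t) = f (omitMap (⇑p) 1 j v) := by
          intro j
          refine hFf _ _ fun s' hs' => ?_
          show t.1 (j.succAbove 0) ∈ s' ↔ v.1 (j.succAbove 0) ∈ s'
          exact (hv (j.succAbove 0) s' hs').symm
        have h0 := ContinuousMap.congr_fun hdel v
        show (∑ j : Fin 2, (-1) ^ (j : ℕ) * F (omitMap q 1 j t)) = 0
        calc (∑ j : Fin 2, (-1) ^ (j : ℕ) * F (omitMap q 1 j t))
            = ∑ j : Fin 2, (-1) ^ (j : ℕ) * f (omitMap (⇑p) 1 j v) :=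
              Finset.sum_congr rfl fun j _ => by rw [hterm j]
          _ = 0 := h0
      have hbot := exact_comb_bot q s hs F hFc
      set g₀ : Y → ℤ := fun y => F ⟨fun _ => s (fun u => y ∈ (u : Set Y)), fun _ _ => rfl⟩
        with hg₀
      have hginv : ∀ y y' : Y, (∀ t ∈ T, (y ∈ t ↔ y' ∈ t)) → g₀ y = g₀ y' := by
        intro y y' h
        have hfun : (fun u : ↥T => y ∈ (u : Set Y)) = fun u : ↥T => y' ∈ (u : Set Y) :=
          funext fun u => propext (h u u.2)
        show F ⟨fun _ => s (fun u => y ∈ (u : Set Y)), fun _ _ => rfl⟩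
            = F ⟨fun _ => s (fun u => y' ∈ (u : Set Y)), fun _ _ => rfl⟩
        congr 1
        exact Subtype.ext (funext fun _ => congrArg s hfun)
      have hgcont : Continuous g₀ := continuous_of_patternY T hT1 g₀ hginv
      refine ⟨⟨g₀, hgcont⟩, ?_⟩
      ext v
      have hcond : ∀ k l : Fin 1, q (v.1 k) = q (v.1 l) := by
        intro k l
        simp only [hq]
        rw [v.2 k l]
      set tv : FiberPow q 1 := ⟨v.1, hcond⟩ with htv
      have e1 : f v = F tv := (hFf tv v (fun s' _ => Iff.rfl)).symm
      have e2 : F tv = g₀ (p (v.1 0)) := by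
        rw [hbot tv]
      show f v = g₀ (p (v.1 0))
      rw [e1, e2]
    · rintro ⟨g, rfl⟩
      exact part2 g
  · -- exactness at higher degrees
    intro n hn f
    constructor
    · intro hdel
      obtain ⟨n', rfl⟩ : ∃ n', n = n' + 1 := ⟨n - 1, by omega⟩
      obtain ⟨S, hS1, hS2⟩ := exists_pattern_family p (n' + 2) f
      obtain ⟨T, hT1, hT2⟩ := main_achieve p S hS1 (n' + 3)
      set q : X → (↥T → Prop) := fun x t => (p x : Y) ∈ (t : Set Y) with hq
      have hsec : ∃ s : (↥T → Prop) → X, ∀ a : X, q (s (q a)) = q a := by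
        refine ⟨fun b => if h : ∃ a, q a = b then h.choose else Classical.arbitrary X,
          fun a => ?_⟩
        have h : ∃ a', q a' = q a := ⟨a, rfl⟩
        simp only [dif_pos h]
        exact h.choose_spec
      obtain ⟨s, hs⟩ := hsec
      have ach3 : ∀ t : FiberPow q (n' + 3), ∃ v : FiberPow (⇑p) (n' + 3),
          ∀ k, ∀ s' ∈ S, (v.1 k ∈ s' ↔ t.1 k ∈ s') := fun t =>
        hT2 t.1 (fun k l u hu => iff_of_eq (congrFun (t.2 k l) ⟨u, hu⟩))
      have ach2 : ∀ t : FiberPow q (n' + 2), ∃ v : FiberPow (⇑p) (n' + 2),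
          ∀ k, ∀ s' ∈ S, (v.1 k ∈ s' ↔ t.1 k ∈ s') := by
        intro t
        obtain ⟨v', hv'⟩ := ach3 (consFP (t.1 0) t rfl)
        refine ⟨omitMap (⇑p) (n' + 2) 0 v', fun k s' hs' => ?_⟩
        have h1 := hv' k.succ s' hs'
        have h2 : (consFP (t.1 0) t rfl).1 k.succ = t.1 k := by
          show (Fin.cons (t.1 0) t.1 : Fin (n' + 3) → X) k.succ = t.1 k
          exact Fin.cons_succ _ _ _
        rw [h2] at h1
        have h3 : (omitMap (⇑p) (n' + 2) 0 v').1 k = v'.1 k.succ := by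
          show v'.1 ((0 : Fin (n' + 3)).succAbove k) = v'.1 k.succ
          rw [Fin.succAbove_zero]
        rw [h3]
        exact h1
      choose achf achh using ach2
      set F : FiberPow q (n' + 2) → ℤ := fun t => f (achf t) with hFdef
      have hFf : ∀ (t : FiberPow q (n' + 2)) (w : FiberPow (⇑p) (n' + 2)),
          (∀ k, ∀ s' ∈ S, (t.1 k ∈ s' ↔ w.1 k ∈ s')) → F t = f w := by
        intro t w h
        exact hS2 _ _ fun k s' hs' => ((achh t k s' hs').trans (h k s' hs'))
      have hFinv : ∀ t t' : FiberPow q (n' + 2),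
          (∀ k, ∀ s' ∈ S, (t.1 k ∈ s' ↔ t'.1 k ∈ s')) → F t = F t' := by
        intro t t' h
        refine hFf t (achf t') fun k s' hs' => ((h k s' hs').trans (achh t' k s' hs').symm)
      have hFc : Dfun q (n' + 2) F = 0 := by
        funext t
        obtain ⟨v, hv⟩ := ach3 t
        have hterm : ∀ j : Fin (n' + 3),
            F (omitMap q (n' + 2) j t) = f (omitMap (⇑p) (n' + 2) j v) := by
          intro j
          refine hFf _ _ fun k s' hs' => ?_
          show t.1 (j.succAbove k) ∈ s' ↔ v.1 (j.succAbove k) ∈ s'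
          exact (hv (j.succAbove k) s' hs').symm
        have h0 := ContinuousMap.congr_fun hdel v
        show (∑ j : Fin (n' + 3), (-1) ^ (j : ℕ) * F (omitMap q (n' + 2) j t)) = 0
        calc (∑ j : Fin (n' + 3), (-1) ^ (j : ℕ) * F (omitMap q (n' + 2) j t))
            = ∑ j : Fin (n' + 3), (-1) ^ (j : ℕ) * f (omitMap (⇑p) (n' + 2) j v) :=
              Finset.sum_congr rfl fun j _ => by rw [hterm j]
          _ = 0 := h0
      set Gf : FiberPow q (n' + 1) → ℤ :=
        fun t => F (consFP (s (q (t.1 0))) t (by rw [hs])) with hGf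
      have hexact : Dfun q (n' + 1) Gf = F := exact_comb q s hs n' F hFc
      have hcond : ∀ v : FiberPow (⇑p) (n' + 1), ∀ k l, q (v.1 k) = q (v.1 l) := by
        intro v k l
        simp only [hq]
        rw [v.2 k l]
      set g₀ : FiberPow (⇑p) (n' + 1) → ℤ := fun v => Gf ⟨v.1, hcond v⟩ with hg₀
      have hGinv : ∀ t t' : FiberPow q (n' + 1),
          q (t.1 0) = q (t'.1 0) →
          (∀ k, ∀ s' ∈ S, (t.1 k ∈ s' ↔ t'.1 k ∈ s')) → Gf t = Gf t' := by
        intro t t' hhead h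
        refine hFinv _ _ fun k s' hs' => ?_
        have ha : s (q (t.1 0)) = s (q (t'.1 0)) := congrArg s hhead
        refine Fin.cases ?_ ?_ k
        · show (Fin.cons (s (q (t.1 0))) t.1 : Fin (n' + 2) → X) 0 ∈ s'
              ↔ (Fin.cons (s (q (t'.1 0))) t'.1 : Fin (n' + 2) → X) 0 ∈ s'
          rw [Fin.cons_zero, Fin.cons_zero, ha]
        · intro k'
          show (Fin.cons (s (q (t.1 0))) t.1 : Fin (n' + 2) → X) k'.succ ∈ s'
              ↔ (Fin.cons (s (q (t'.1 0))) t'.1 : Fin (n' + 2) → X) k'.succ ∈ s'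
          rw [Fin.cons_succ, Fin.cons_succ]
          exact h k' s' hs'
      have hgcont : Continuous g₀ := by
        refine continuous_of_pattern p S T hS1 hT1 g₀ fun v w h => ?_
        refine hGinv _ _ ?_ fun k s' hs' => (h k).1 s' hs'
        exact funext fun u => propext ((h 0).2 u u.2)
      refine ⟨⟨g₀, hgcont⟩, ?_⟩
      ext v
      have hcondv : ∀ k l, q (v.1 k) = q (v.1 l) := by
        intro k l
        simp only [hq]
        rw [v.2 k l]
      set tv : FiberPow q (n' + 2) := ⟨v.1, hcondv⟩ with htv
      have e1 : f v = F tv := (hFf tv v (fun k s' _ => Iff.rfl)).symm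
      have e2 : F tv = Dfun q (n' + 1) Gf tv := by rw [hexact]
      have e3 : Dfun q (n' + 1) Gf tv
          = ∑ j : Fin (n' + 2), (-1) ^ (j : ℕ) * g₀ (omitMap (⇑p) (n' + 1) j v) := by
        refine Finset.sum_congr rfl fun j _ => ?_
        exact congrArg (fun z => (-1 : ℤ) ^ (j : ℕ) * z) (congrArg Gf (Subtype.ext rfl))
      show f v = ∑ j : Fin (n' + 2), (-1) ^ (j : ℕ) * g₀ (omitMap (⇑p) (n' + 1) j v)
      rw [e1, e2, e3]
    · rintro ⟨g, rfl⟩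
      exact part3 n g
end

section
/- Let p : (X,T) → (Y,S) be a factor map between Cantor minimal systems. If f ∈ C(X,ℤ) represents a torsion element of K₀(X,T)/p*K₀(Y,S), i.e. k f = g ∘ p + φ − φ ∘ T for some k > 0, g ∈ C(Y,ℤ), φ ∈ C(X,ℤ), then the function (x₁,x₂) ↦ f(x₁) − f(x₂) on X²_p = {(x₁,x₂) : p(x₁)=p(x₂)} is a coboundary of (X²_p, T×T): there exists ψ ∈ C(X²_p,ℤ) with f(x₁) − f(x₂) = ψ(x₁,x₂) − ψ(Tx₁,Tx₂). -/
/-- if `f` represents a torsion element of `K₀(X,T)/p*K₀(Y,S)`, i.e.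
`k f = g ∘ p + φ - φ ∘ T` with `k > 0`, then `(x₁,x₂) ↦ f x₁ - f x₂` is a coboundary
of `(X²_p, T×T)`. -/
theorem torsion_implies_coboundary_on_fibered_square {X Y : Type*}
    [TopologicalSpace X] [CompactSpace X] [TopologicalSpace.MetrizableSpace X]
    [TotallyDisconnectedSpace X] [PerfectSpace X] [Nonempty X]
    [TopologicalSpace Y] [CompactSpace Y] [TopologicalSpace.MetrizableSpace Y]
    [TotallyDisconnectedSpace Y] [PerfectSpace Y] [Nonempty Y]
    (T : X ≃ₜ X) (S : Y ≃ₜ Y)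
    (hminX : ∀ x : X, Dense (Set.range fun n : ℤ => (T.toEquiv ^ n) x))
    (hminY : ∀ y : Y, Dense (Set.range fun n : ℤ => (S.toEquiv ^ n) y))
    (p : C(X, Y)) (hps : Function.Surjective p)
    (hfac : ∀ x : X, p (T x) = S (p x))
    (f φ : C(X, ℤ)) (g : C(Y, ℤ)) (k : ℤ) (hk : 0 < k)
    (htor : ∀ x : X, k * f x = g (p x) + φ x - φ (T x)) :
    ∃ ψ : C({v : X × X // p v.1 = p v.2}, ℤ),
      ∀ (x₁ x₂ : X) (h : p x₁ = p x₂),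
        f x₁ - f x₂ = ψ ⟨(x₁, x₂), h⟩ -
          ψ ⟨(T x₁, T x₂), by rw [hfac, hfac, h]⟩ := by
  refine ⟨⟨fun v => (φ v.1.1 - φ v.1.2) / k, ?_⟩, ?_⟩
  · exact (continuous_of_discreteTopology (f := fun n : ℤ => n / k)).comp
      ((φ.continuous.comp (continuous_fst.comp continuous_subtype_val)).sub
        (φ.continuous.comp (continuous_snd.comp continuous_subtype_val)))
  · intro x₁ x₂ h
    have h1 := htor x₁
    have h2 := htor x₂
    have key : φ x₁ - φ x₂ = (φ (T x₁) - φ (T x₂)) + (f x₁ - f x₂) * k := by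
      rw [h] at h1; linarith
    simp only [ContinuousMap.coe_mk]
    rw [key, Int.add_mul_ediv_right _ _ (ne_of_gt hk)]
    ring
end

section
/- Let p : (X,T) → (Y,S) be a proximal extension between compact minimal systems. Then for every ε > 0, every n ≥ 1 and all pairs (x₁,x₁'),…,(xₙ,xₙ') ∈ X²_p there exists an integer k with d(Tᵏxᵢ, Tᵏxᵢ') < ε for all 1 ≤ i ≤ n. -/
/-!
Let `T × T` act diagonally on `n`-tuples of pairs and consider forward orbit closures. The set
of fibred pairs is closed and invariant, so every pair occurring in the orbit closure of the
tuple is fibred, hence proximal, and by compactness its own orbit closure meets the diagonal.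
Since coordinate projections are equivariant and map compact orbit closures onto orbit
closures, a point of the tuple's orbit closure can be moved onto the diagonal in one more
coordinate, while the coordinates already on the (closed, invariant) diagonal stay there.
After `n` steps the orbit closure of the tuple meets the diagonal, and an orbit point near
that point gives the common time `k`.
-/

open Set Function

def orbitClosure {Z : Type*} [TopologicalSpace Z] (g : Z → Z) (z : Z) : Set Z :=
  closure (range fun k : ℕ => g^[k] z)

section OrbitClosure

variable {Z : Type*} [TopologicalSpace Z] {g : Z → Z}

theorem iterate_mem_orbitClosure (g : Z → Z) (z : Z) (k : ℕ) : g^[k] z ∈ orbitClosure g z :=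
  subset_closure ⟨k, rfl⟩

theorem self_mem_orbitClosure (g : Z → Z) (z : Z) : z ∈ orbitClosure g z :=
  iterate_mem_orbitClosure g z 0

theorem orbitClosure_subset_of_mapsTo {s : Set Z} (hs : IsClosed s) (hgs : MapsTo g s s)
    {z : Z} (hz : z ∈ s) : orbitClosure g z ⊆ s :=
  closure_minimal (range_subset_iff.2 fun k => hgs.iterate k hz) hs

theorem mapsTo_orbitClosure (hg : Continuous g) (z : Z) :
    MapsTo g (orbitClosure g z) (orbitClosure g z) := by
  refine MapsTo.closure ?_ hg
  rintro _ ⟨k, rfl⟩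
  exact ⟨k + 1, iterate_succ_apply' g k z⟩

theorem orbitClosure_subset_orbitClosure (hg : Continuous g) {z v : Z}
    (hv : v ∈ orbitClosure g z) : orbitClosure g v ⊆ orbitClosure g z :=
  orbitClosure_subset_of_mapsTo isClosed_closure (mapsTo_orbitClosure hg z) hv

theorem orbitClosure_subset_image_of_semiconj [CompactSpace Z] {Z' : Type*}
    [TopologicalSpace Z'] [T2Space Z'] {g' : Z' → Z'} {π : Z → Z'} (hπ : Continuous π)
    (hsemi : Semiconj π g g') (z : Z) : orbitClosure g' (π z) ⊆ π '' orbitClosure g z := by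
  refine closure_minimal ?_ (isClosed_closure.isCompact.image hπ).isClosed
  rintro _ ⟨k, rfl⟩
  exact ⟨g^[k] z, iterate_mem_orbitClosure g z k, (hsemi.iterate_right k) z⟩

theorem orbitClosure_piMap_subset_pi {ι : Type*} (s : Set ι) {A : Set Z} (hA : IsClosed A)
    (hgA : MapsTo g A A) {v : ι → Z} (hv : v ∈ s.pi fun _ => A) :
    orbitClosure (Pi.map fun _ : ι => g) v ⊆ s.pi fun _ => A :=
  orbitClosure_subset_of_mapsTo (isClosed_set_pi fun _ _ => hA) (piMap_mapsTo_pi fun _ _ => hgA) hv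

theorem exists_mem_orbitClosure_piMap_forall_mem [CompactSpace Z] [T2Space Z]
    (hg : Continuous g) {R D : Set Z} (hR : IsClosed R) (hgR : MapsTo g R R)
    (hD : IsClosed D) (hgD : MapsTo g D D) (hRD : ∀ z ∈ R, (orbitClosure g z ∩ D).Nonempty)
    {ι : Type*} [Finite ι] (w : ι → Z) (hw : ∀ i, w i ∈ R) :
    ∃ v ∈ orbitClosure (Pi.map fun _ : ι => g) w, ∀ i, v i ∈ D := by
  classical
  cases nonempty_fintype ι
  have hG : Continuous (Pi.map fun _ : ι => g) :=
    continuous_pi fun i => hg.comp (continuous_apply i)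
  suffices h : ∀ s : Finset ι,
      ∃ v ∈ orbitClosure (Pi.map fun _ : ι => g) w, ∀ i ∈ s, v i ∈ D by
    simpa using h Finset.univ
  intro s
  induction s using Finset.induction_on with
  | empty => exact ⟨w, self_mem_orbitClosure _ w, by simp⟩
  | insert j s _ ih =>
    obtain ⟨v, hvw, hvD⟩ := ih
    have hvR : v j ∈ R :=
      orbitClosure_piMap_subset_pi univ hR hgR (fun i _ => hw i) hvw j (mem_univ j)
    obtain ⟨d, hd, hdD⟩ := hRD (v j) hvR
    obtain ⟨u, hu, rfl⟩ := orbitClosure_subset_image_of_semiconj (continuous_apply j)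
      (g := Pi.map fun _ : ι => g) (fun _ => rfl) v hd
    refine ⟨u, orbitClosure_subset_orbitClosure hG hvw hu, ?_⟩
    rw [Finset.forall_mem_insert]
    exact ⟨hdD, orbitClosure_piMap_subset_pi (s : Set ι) hD hgD hvD hu⟩

end OrbitClosure

section Proximal

variable {X : Type*} [MetricSpace X] {f : X → X}

theorem orbitClosure_prodMap_inter_diagonal_nonempty [CompactSpace X] {a b : X}
    (hprox : ∀ δ > 0, ∃ k : ℕ, dist (f^[k] a) (f^[k] b) < δ) :
    (orbitClosure (Prod.map f f) (a, b) ∩ diagonal X).Nonempty := by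
  obtain ⟨z, hz, hmin⟩ := isClosed_closure.isCompact.exists_isMinOn
    ⟨_, self_mem_orbitClosure _ (a, b)⟩ (continuous_dist.comp_continuousOn continuousOn_id)
  refine ⟨z, hz, dist_eq_zero.1 (le_antisymm ?_ dist_nonneg)⟩
  by_contra! hpos
  obtain ⟨k, hk⟩ := hprox _ hpos
  have := hmin (iterate_mem_orbitClosure (Prod.map f f) (a, b) k)
  simp only [mem_ofPred_eq, Prod.map_iterate] at this
  exact this.not_gt hk

theorem exists_iterate_forall_dist_lt_of_mem_orbitClosure {ι : Type*} [Finite ι]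
    {w v : ι → X × X} (hv : v ∈ orbitClosure (Pi.map fun _ : ι => Prod.map f f) w)
    (hvD : ∀ i, v i ∈ diagonal X) {ε : ℝ} (hε : 0 < ε) :
    ∃ k : ℕ, ∀ i, dist (f^[k] (w i).1) (f^[k] (w i).2) < ε := by
  have hU : IsOpen {u : ι → X × X | ∀ i, dist (u i).1 (u i).2 < ε} := by
    simp only [ofPred_forall]
    exact isOpen_iInter_of_finite fun i => isOpen_lt (by fun_prop) continuous_const
  obtain ⟨_, hu, k, rfl⟩ := mem_closure_iff.1 hv _ hU fun i => by
    rw [(hvD i : (v i).1 = (v i).2), dist_self]; exact hε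
  exact ⟨k, by simpa using hu⟩

theorem exists_iterate_forall_dist_lt_of_proximal [CompactSpace X] (hf : Continuous f)
    {R : Set (X × X)} (hR : IsClosed R) (hfR : MapsTo (Prod.map f f) R R)
    (hprox : ∀ z ∈ R, ∀ δ > 0, ∃ k : ℕ, dist (f^[k] z.1) (f^[k] z.2) < δ)
    {ι : Type*} [Finite ι] (w : ι → X × X) (hw : ∀ i, w i ∈ R) {ε : ℝ} (hε : 0 < ε) :
    ∃ k : ℕ, ∀ i, dist (f^[k] (w i).1) (f^[k] (w i).2) < ε := by
  obtain ⟨v, hv, hvD⟩ := exists_mem_orbitClosure_piMap_forall_mem (hf.prodMap hf) hR hfR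
    isClosed_diagonal (fun z (hz : z.1 = z.2) => congrArg f hz)
    (fun z hz => orbitClosure_prodMap_inter_diagonal_nonempty (hprox z hz)) w hw
  exact exists_iterate_forall_dist_lt_of_mem_orbitClosure hv hvD hε

end Proximal

theorem proximal_simultaneous_general {X Y : Type*} [MetricSpace X] [CompactSpace X]
    [MetricSpace Y] [CompactSpace Y]
    (T : X ≃ₜ X) (S : Y ≃ₜ Y)
    (p : C(X, Y))
    (hfac : ∀ x : X, p (T x) = S (p x))
    (hprox : ∀ x x' : X, p x = p x' → ∀ δ : ℝ, 0 < δ →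
      ∃ k : ℕ, 0 < k ∧ dist ((T.toEquiv ^ k) x) ((T.toEquiv ^ k) x') < δ) :
    ∀ (ε : ℝ), 0 < ε → ∀ (n : ℕ), 1 ≤ n → ∀ (x x' : Fin n → X),
      (∀ i, p (x i) = p (x' i)) →
      ∃ k : ℤ, ∀ i, dist ((T.toEquiv ^ k) (x i)) ((T.toEquiv ^ k) (x' i)) < ε := by
  intro ε hε n _ x x' hfib
  have hfibred : MapsTo (Prod.map T T) {z | p z.1 = p z.2} {z | p z.1 = p z.2} :=
    fun z (hz : p z.1 = p z.2) => by
      simp only [mem_ofPred_eq, Prod.map_fst, Prod.map_snd, hfac, hz]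
  obtain ⟨k, hk⟩ := exists_iterate_forall_dist_lt_of_proximal T.continuous
    (isClosed_eq (by fun_prop) (by fun_prop)) hfibred
    -- `T^[k]` and `T.toEquiv ^ k` agree definitionally (`Equiv.Perm.iterate_eq_pow` is `rfl`).
    (fun z hz δ hδ => (hprox z.1 z.2 hz δ hδ).imp fun _ => And.right)
    (fun i => (x i, x' i)) hfib hε
  exact ⟨k, fun i => by rw [zpow_natCast]; exact hk i⟩

/-- for a proximal extension `p : (X,T) → (Y,S)` between compact minimal
systems, finitely many fibered pairs can be simultaneously brought `ε`-close by a
single power of `T`. -/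
theorem proximal_simultaneous {X Y : Type*} [MetricSpace X] [CompactSpace X]
    [MetricSpace Y] [CompactSpace Y]
    (T : X ≃ₜ X) (S : Y ≃ₜ Y)
    (hminX : ∀ x : X, Dense (Set.range fun n : ℤ => (T.toEquiv ^ n) x))
    (hminY : ∀ y : Y, Dense (Set.range fun n : ℤ => (S.toEquiv ^ n) y))
    (p : C(X, Y)) (hps : Function.Surjective p)
    (hfac : ∀ x : X, p (T x) = S (p x))
    (hprox : ∀ x x' : X, p x = p x' → ∀ δ : ℝ, 0 < δ →
      ∃ k : ℕ, 0 < k ∧ dist ((T.toEquiv ^ k) x) ((T.toEquiv ^ k) x') < δ) :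
    ∀ (ε : ℝ), 0 < ε → ∀ (n : ℕ), 1 ≤ n → ∀ (x x' : Fin n → X),
      (∀ i, p (x i) = p (x' i)) →
      ∃ k : ℤ, ∀ i, dist ((T.toEquiv ^ k) (x i)) ((T.toEquiv ^ k) (x' i)) < ε :=
  proximal_simultaneous_general T S p hfac hprox
end

section
/- Let p : (X,T) → (Y,S) be a proximal extension between Cantor minimal systems. Then for every n ≥ 1, every continuous T×⋯×T-invariant integer-valued function on Xⁿ_p = {(x₁,…,xₙ) : p(x₁)=⋯=p(xₙ)} is constant. -/
variable {X Y : Type*} [TopologicalSpace X] [TopologicalSpace Y]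

/-!
A continuous `ℤ`-valued function on a compact metric space is constant on all pairs of points at
distance less than some fixed `δ`, so an invariant one takes the same value at the two points of a
proximal pair. In `Xⁿ_p`, replacing the `i`-th coordinate of `v` by its `j`-th gives a point
proximal to `v` as soon as `vᵢ` and `vⱼ` are proximal, which they are since `p(vᵢ) = p(vⱼ)`.
Doing this for every coordinate moves any point of `Xⁿ_p` onto the diagonal without changing the
value of the function, and on the diagonal the function is constant by minimality of `T`.
-/

open Function

section Dynamics

variable {Z : Type*}

def Proximal [PseudoMetricSpace Z] (τ : Z → Z) (x y : Z) : Prop :=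
  ∀ δ > 0, ∃ k : ℕ, dist (τ^[k] x) (τ^[k] y) < δ

theorem Proximal.apply_eq [PseudoMetricSpace Z] [CompactSpace Z] {τ : Z → Z} {x y : Z}
    (h : Proximal τ x y) (f : C(Z, ℤ)) (hf : ∀ z, f (τ z) = f z) : f x = f y := by
  obtain ⟨δ, hδ, hfδ⟩ := Metric.uniformContinuous_iff.mp
    (CompactSpace.uniformContinuous_of_continuous f.continuous) 1 one_pos
  obtain ⟨k, hk⟩ := h δ hδ
  have hf_iterate : ∀ z, f (τ^[k] z) = f z := congrFun (iterate_invariant (funext hf) k)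
  rw [← hf_iterate x, ← hf_iterate y]
  by_contra hne
  exact (Int.pairwise_one_le_dist hne).not_gt (hfδ hk)

theorem apply_zpow_apply_eq {α : Type*} {T : Equiv.Perm Z} {g : Z → α}
    (hg : ∀ z, g (T z) = g z) (m : ℤ) (z : Z) : g ((T ^ m) z) = g z := by
  induction m using Int.induction_on generalizing z with
  | zero => rfl
  | succ m ih => rw [zpow_add_one, Equiv.Perm.mul_apply, ih, hg]
  | pred m ih =>
    rw [zpow_sub_one, Equiv.Perm.mul_apply, ih, ← hg]
    exact congrArg g (T.apply_symm_apply z)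

theorem apply_eq_of_dense_orbit [TopologicalSpace Z] {α : Type*} [TopologicalSpace α]
    [T2Space α] {T : Equiv.Perm Z} {g : Z → α} (hg : Continuous g) (hgT : ∀ z, g (T z) = g z)
    {x : Z} (hx : Dense (Set.range fun m : ℤ => (T ^ m) x)) (y : Z) : g y = g x :=
  (isClosed_eq hg continuous_const).closure_subset_iff.mpr
    (Set.range_subset_iff.mpr fun m => apply_zpow_apply_eq hgT m x) (hx y)

end Dynamics

namespace FiberPow

variable {X Y : Type*} {p : X → Y} {n : ℕ}

def diag (x : X) : FiberPow p n := ⟨fun _ => x, fun _ _ => rfl⟩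

def copy (v : FiberPow p n) (i j : Fin n) : FiberPow p n :=
  ⟨update v.1 i (v.1 j), fun a b => by
    simp only [update_apply]
    split_ifs <;> exact v.2 _ _⟩

def map (T : X → X) {S : Y → Y} (h : Semiconj p T S) (v : FiberPow p n) : FiberPow p n :=
  ⟨fun i => T (v.1 i), fun i j => by rw [h, h, v.2 i j]⟩

theorem map_iterate_val (T : X → X) {S : Y → Y} (h : Semiconj p T S) (k : ℕ)
    (v : FiberPow p n) : ((map T h)^[k] v).1 = fun a => T^[k] (v.1 a) := by
  induction k with
  | zero => rfl
  | succ k ih =>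
    funext a
    rw [iterate_succ_apply']
    change T (((map T h)^[k] v).1 a) = _
    rw [ih, iterate_succ_apply']

theorem eq_diag_of_forall_copy {α : Type*} {f : FiberPow p n → α}
    (hf : ∀ v i j, f (v.copy i j) = f v) (v : FiberPow p n) (j : Fin n) :
    f v = f (diag (v.1 j)) := by
  suffices ∀ s : Finset (Fin n), ∀ v : FiberPow p n, (∀ a ∉ s, v.1 a = v.1 j) →
      f v = f (diag (v.1 j)) from
    this Finset.univ v (by simp)
  intro s
  induction s using Finset.induction_on with
  | empty => exact fun v hv => congrArg f (Subtype.ext (funext fun a => hv a (by simp)))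
  | insert i s _ ih =>
    intro v hv
    have hj : (v.copy i j).1 j = v.1 j := by
      by_cases hji : j = i <;> simp [copy, hji]
    rw [← hf v i j, ih (v.copy i j), hj]
    intro a ha
    rw [hj]
    by_cases hai : a = i
    · simp [copy, hai]
    · simpa [copy, hai] using hv a (by simp [hai, ha])

theorem continuous_diag [TopologicalSpace X] : Continuous (diag : X → FiberPow p n) :=
  (continuous_pi fun _ => continuous_id).subtype_mk _

instance compactSpace [TopologicalSpace X] [CompactSpace X] [TopologicalSpace Y] [T2Space Y]
    {p : C(X, Y)} : CompactSpace (FiberPow p n) := by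
  have : IsClosed {v : Fin n → X | ∀ i j, p (v i) = p (v j)} := by
    simp only [Set.ofPred_forall]
    exact isClosed_iInter fun i => isClosed_iInter fun j => isClosed_eq (by fun_prop) (by fun_prop)
  exact isCompact_iff_compactSpace.mp this.isCompact

theorem proximal_copy [PseudoMetricSpace X] (T : X → X) {S : Y → Y} (h : Semiconj p T S)
    (v : FiberPow p n) (i j : Fin n) (hv : Proximal T (v.1 i) (v.1 j)) :
    Proximal (map T h) v (v.copy i j) := by
  intro δ hδ
  obtain ⟨k, hk⟩ := hv δ hδ
  refine ⟨k, ?_⟩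
  rw [Subtype.dist_eq, map_iterate_val, map_iterate_val, dist_pi_lt_iff hδ]
  intro a
  by_cases ha : a = i
  · subst ha
    simpa [copy] using hk
  · simpa [copy, ha] using hδ

end FiberPow

/-- if `p : (X,T) → (Y,S)` is a proximal extension between Cantor
minimal systems, then every continuous `T×⋯×T`-invariant integer-valued function
on `Xⁿ_p` is constant. -/
theorem invariant_const_of_proximal {X Y : Type*}
    [MetricSpace X] [CompactSpace X]
    [MetricSpace Y]
    (T : X ≃ₜ X) (S : Y ≃ₜ Y)
    (hminX : ∀ x : X, Dense (Set.range fun n : ℤ => (T.toEquiv ^ n) x))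
    (p : C(X, Y))
    (hfac : ∀ x : X, p (T x) = S (p x))
    (hprox : ∀ x x' : X, p x = p x' → ∀ δ : ℝ, 0 < δ →
      ∃ k : ℕ, 0 < k ∧ dist ((T.toEquiv ^ k) x) ((T.toEquiv ^ k) x') < δ)
    (n : ℕ) (hn : 1 ≤ n) (f : C(FiberPow (⇑p) n, ℤ))
    (hinv : ∀ v : FiberPow (⇑p) n,
      f ⟨fun i => T (v.1 i), by intro i j; rw [hfac, hfac, v.2 i j]⟩ = f v) :
    ∀ v w : FiberPow (⇑p) n, f v = f w := by
  have hproxT : ∀ x x', p x = p x' → Proximal T x x' := fun x x' hxx' δ hδ =>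
    (hprox x x' hxx' δ hδ).imp fun _ => And.right
  have hcopy : ∀ v i j, f (v.copy i j) = f v := fun v i j =>
    ((FiberPow.proximal_copy T hfac v i j (hproxT _ _ (v.2 i j))).apply_eq f hinv).symm
  have hdiag : ∀ x y : X, f (FiberPow.diag x) = f (FiberPow.diag y) := fun x y =>
    apply_eq_of_dense_orbit (T := T.toEquiv) (g := fun x => f (FiberPow.diag x))
      (f.continuous.comp FiberPow.continuous_diag) (fun x => hinv (FiberPow.diag x)) (hminX y) x
  intro v w
  rw [FiberPow.eq_diag_of_forall_copy hcopy v ⟨0, hn⟩,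
    FiberPow.eq_diag_of_forall_copy hcopy w ⟨0, hn⟩, hdiag]
end

section
/- Let 0 → K →ʲ L →q M → 0 be a short exact sequence of abelian groups with L torsion-free, G a finite abelian group, and let Φ_G : ker(j ⊗ id_G) → Hom(Ĝ, M) be the canonical isomorphism. For α ∈ ker(j ⊗ id_G), the homomorphism Φ_G(α) is injective if and only if α does not lie in the image of K ⊗ G' → K ⊗ G for any proper subgroup G' of G. -/
/-- The group `ℚ/ℤ`. -/
abbrev QZ : Type := ℚ ⧸ AddSubgroup.zmultiples (1 : ℚ)

variable {K L G : Type*} [AddCommGroup K] [AddCommGroup L] [AddCommGroup G]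

/-- `j ⊗ id_{G'} : K ⊗ G' → L ⊗ G'` for a subgroup `G'` of `G`. -/
noncomputable def tmap (j : K →+ L) (G' : AddSubgroup G) :
    TensorProduct ℤ K G' →ₗ[ℤ] TensorProduct ℤ L G' :=
  TensorProduct.map j.toIntLinearMap LinearMap.id

/-- The canonical map `K ⊗ G' → K ⊗ G` induced by the inclusion `G' ⊆ G`
(with `G` viewed as its own top subgroup). -/
noncomputable def tincl (K : Type*) [AddCommGroup K] {G : Type*} [AddCommGroup G]
    (G' : AddSubgroup G) :
    TensorProduct ℤ K G' →ₗ[ℤ] TensorProduct ℤ K (⊤ : AddSubgroup G) :=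
  TensorProduct.map LinearMap.id (AddSubgroup.inclusion le_top).toIntLinearMap

/-- Restriction of characters `Ĝ → Ĝ'` dual to the inclusion `G' ⊆ G`. -/
def dresHom {G : Type*} [AddCommGroup G] (G' : AddSubgroup G) :
    ((⊤ : AddSubgroup G) →+ QZ) →+ (G' →+ QZ) :=
  AddMonoidHom.mk' (fun χ => χ.comp (AddSubgroup.inclusion le_top))
    (fun _ _ => by ext _; rfl)

/-!
`Φ_G(α)` fails to be injective iff it kills some character `χ ≠ 0` of `G`.
If `α` comes from `K ⊗ G'` with `G' < G`, then, `L` being flat, it comes from `ker (j ⊗ id_{G'})`,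
so by naturality `Φ_G(α)` factors through restriction of characters to `G'` and kills every
nonzero character vanishing on `G'` (which exists as `ℚ/ℤ` is injective).
Conversely, if `Φ_G(α)` kills `χ ≠ 0`, take `G' = ker χ < G`. A character `ψ` vanishing on `G'`
factors as `Θ ∘ χ` with `Θ ∈ End(ℚ/ℤ)`, and `Θ` is multiplication by an integer on the finite group
`χ(G)`; hence `ψ ∈ ℤχ` and `Φ_G(α)` factors through restriction to `G'`, i.e.
`Φ_G(α) = Φ_G(β)` for some `β` coming from `K ⊗ G'`. Injectivity of `Φ_G` gives `α = β`.
-/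

open Function TensorProduct

namespace QZ

lemma nsmul_mk_inv_natCast {n : ℕ} (hn : n ≠ 0) :
    n • (QuotientAddGroup.mk (n : ℚ)⁻¹ : QZ) = 0 := by
  rw [← QuotientAddGroup.mk_nsmul, nsmul_eq_mul, mul_inv_cancel₀ (Nat.cast_ne_zero.2 hn),
    QuotientAddGroup.eq_zero_iff]
  exact AddSubgroup.mem_zmultiples 1

lemma exists_eq_zsmul_mk_inv_natCast {n : ℕ} (hn : n ≠ 0) {y : QZ} (hy : n • y = 0) :
    ∃ m : ℤ, y = m • (QuotientAddGroup.mk (n : ℚ)⁻¹ : QZ) := by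
  obtain ⟨r, rfl⟩ := QuotientAddGroup.mk_surjective y
  rw [← QuotientAddGroup.mk_nsmul, QuotientAddGroup.eq_zero_iff] at hy
  obtain ⟨m, hm⟩ := AddSubgroup.mem_zmultiples_iff.1 hy
  refine ⟨m, ?_⟩
  rw [← QuotientAddGroup.mk_zsmul]
  congr 1
  rw [zsmul_one, nsmul_eq_mul] at hm
  rw [zsmul_eq_mul, hm]
  field_simp

lemma exists_zsmul_eq_of_nsmul_eq_zero (Θ : QZ →+ QZ) {n : ℕ} (hn : n ≠ 0) :
    ∃ k : ℤ, ∀ y : QZ, n • y = 0 → Θ y = k • y := by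
  obtain ⟨k, hk⟩ := exists_eq_zsmul_mk_inv_natCast hn (y := Θ (QuotientAddGroup.mk (n : ℚ)⁻¹))
    (by rw [← map_nsmul, nsmul_mk_inv_natCast hn, map_zero])
  refine ⟨k, fun y hy => ?_⟩
  obtain ⟨m, rfl⟩ := exists_eq_zsmul_mk_inv_natCast hn hy
  rw [map_zsmul, hk, smul_comm]

end QZ

section Characters

variable {A : Type*} [AddCommGroup A]

-- `ℚ/ℤ` is an injective abelian group, so `ψ` extends from `A ⧸ ker χ ↪ ℚ/ℤ` to all of `ℚ/ℤ`.
lemma exists_comp_eq_of_ker_le (χ ψ : A →+ QZ) (h : χ.ker ≤ ψ.ker) :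
    ∃ Θ : QZ →+ QZ, Θ.comp χ = ψ := by
  obtain ⟨Θ, hΘ⟩ := CharacterModule.dual_surjective_of_injective
    (QuotientAddGroup.kerLift χ).toIntLinearMap (QuotientAddGroup.kerLift_injective χ)
    (QuotientAddGroup.lift χ.ker ψ h : CharacterModule (A ⧸ χ.ker))
  exact ⟨Θ, AddMonoidHom.ext fun a => DFunLike.congr_fun hΘ (a : A ⧸ χ.ker)⟩

lemma exists_eq_zsmul_of_ker_le [Finite A] (χ ψ : A →+ QZ) (h : χ.ker ≤ ψ.ker) :
    ∃ k : ℤ, ψ = k • χ := by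
  obtain ⟨Θ, rfl⟩ := exists_comp_eq_of_ker_le χ ψ h
  obtain ⟨k, hk⟩ := QZ.exists_zsmul_eq_of_nsmul_eq_zero Θ (Nat.card_pos (α := A)).ne'
  exact ⟨k, AddMonoidHom.ext fun a => hk (χ a) (by rw [← map_nsmul, card_nsmul_eq_zero', map_zero])⟩

lemma exists_ne_zero_le_ker {H : AddSubgroup A} (hH : H ≠ ⊤) :
    ∃ χ : A →+ QZ, χ ≠ 0 ∧ H ≤ χ.ker := by
  obtain ⟨a, -, ha⟩ := SetLike.exists_of_lt hH.lt_top
  obtain ⟨c, hc⟩ := CharacterModule.exists_character_apply_ne_zero_of_ne_zero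
    (mt (QuotientAddGroup.eq_zero_iff a).1 ha)
  refine ⟨(c : A ⧸ H →+ QZ).comp (QuotientAddGroup.mk' H), fun h0 => hc ?_, fun x hx => ?_⟩
  · exact DFunLike.congr_fun h0 a
  · exact (congrArg c ((QuotientAddGroup.eq_zero_iff x).2 hx)).trans (map_zero c)

end Characters

section Restriction

variable (G' : AddSubgroup G)

lemma dresHom_eq_zero_iff (χ : (⊤ : AddSubgroup G) →+ QZ) :
    dresHom G' χ = 0 ↔ G'.addSubgroupOf ⊤ ≤ χ.ker :=
  ⟨fun h x hx => DFunLike.congr_fun h (⟨x, hx⟩ : G'), fun h => AddMonoidHom.ext fun x => h x.2⟩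

lemma dresHom_surjective : Surjective (dresHom G') := fun φ => by
  obtain ⟨Θ, hΘ⟩ := CharacterModule.dual_surjective_of_injective
    (AddSubgroup.inclusion (le_top : G' ≤ ⊤)).toIntLinearMap
    (AddSubgroup.inclusion_injective le_top) (φ : CharacterModule G')
  exact ⟨Θ, hΘ⟩

lemma exists_comp_dresHom_eq {M : Type*} [AddCommGroup M] (f : ((⊤ : AddSubgroup G) →+ QZ) →+ M)
    (hf : ∀ ψ, dresHom G' ψ = 0 → f ψ = 0) : ∃ g : (G' →+ QZ) →+ M, g.comp (dresHom G') = f :=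
  have hinv := rightInverse_surjInv (dresHom_surjective G')
  ⟨(dresHom G').liftOfRightInverse _ hinv ⟨f, hf⟩,
    (dresHom G').liftOfRightInverse_comp _ hinv ⟨f, hf⟩⟩

end Restriction

lemma addSubgroupOf_map_subtype_top (H : AddSubgroup (⊤ : AddSubgroup G)) :
    (H.map (⊤ : AddSubgroup G).subtype).addSubgroupOf ⊤ = H :=
  AddSubgroup.comap_map_eq_self_of_injective Subtype.val_injective H

lemma map_subtype_top_lt_top {H : AddSubgroup (⊤ : AddSubgroup G)} (hH : H ≠ ⊤) :
    H.map (⊤ : AddSubgroup G).subtype < ⊤ := by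
  refine lt_top_iff_ne_top.2 fun h => hH ?_
  rw [← addSubgroupOf_map_subtype_top H, h, AddSubgroup.addSubgroupOf_eq_top.2 le_top]

lemma exists_ne_zero_dresHom_eq_zero {G' : AddSubgroup G} (hG' : G' < ⊤) :
    ∃ χ : (⊤ : AddSubgroup G) →+ QZ, χ ≠ 0 ∧ dresHom G' χ = 0 := by
  obtain ⟨χ, hχ, hle⟩ := exists_ne_zero_le_ker (H := G'.addSubgroupOf ⊤) fun h =>
    hG'.ne (top_le_iff.1 (AddSubgroup.addSubgroupOf_eq_top.1 h))
  exact ⟨χ, hχ, (dresHom_eq_zero_iff G' χ).2 hle⟩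

lemma tmap_tincl (j : K →+ L) (G' : AddSubgroup G) (x : K ⊗[ℤ] G') :
    tmap j ⊤ (tincl K G' x) = tincl L G' (tmap j G' x) :=
  LinearMap.congr_fun
    ((LinearMap.rTensor_comp_lTensor ..).trans (LinearMap.lTensor_comp_rTensor ..).symm) x

lemma tincl_injective [Module.Flat ℤ L] (G' : AddSubgroup G) : Injective (tincl L G') :=
  Module.Flat.lTensor_preserves_injective_linearMap _ (AddSubgroup.inclusion_injective le_top)

lemma tincl_mem_ker_tmap_iff [Module.Flat ℤ L] (j : K →+ L) (G' : AddSubgroup G)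
    {x : K ⊗[ℤ] G'} : tincl K G' x ∈ LinearMap.ker (tmap j ⊤) ↔ x ∈ LinearMap.ker (tmap j G') := by
  rw [LinearMap.mem_ker, LinearMap.mem_ker, tmap_tincl, ← map_zero (tincl L G'),
    (tincl_injective G').eq_iff]

lemma isAddTorsionFree_of_nsmul_eq_zero (h : ∀ (l : L) (n : ℕ), n ≠ 0 → n • l = 0 → l = 0) :
    IsAddTorsionFree L :=
  ⟨fun n hn a b hab => sub_eq_zero.1 (h _ n hn (by simp only [nsmul_sub, hab, sub_self]))⟩

theorem Phi_injective_iff_general {K L M G : Type*}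
    [AddCommGroup K] [AddCommGroup L] [AddCommGroup M] [AddCommGroup G] [Finite G]
    (j : K →+ L)
    (hLtf : ∀ (l : L) (n : ℕ), n ≠ 0 → n • l = 0 → l = 0)
    (Φ : ∀ G' : AddSubgroup G,
      (LinearMap.ker (tmap j G')) ≃+ ((G' →+ QZ) →+ M))
    (hnat : ∀ (G' : AddSubgroup G) (α' : LinearMap.ker (tmap j G'))
      (β : LinearMap.ker (tmap j (⊤ : AddSubgroup G))),
      (β : TensorProduct ℤ K (⊤ : AddSubgroup G)) = tincl K G' (α' : TensorProduct ℤ K G') →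
      Φ ⊤ β = (Φ G' α').comp (dresHom G'))
    (α : LinearMap.ker (tmap j (⊤ : AddSubgroup G))) :
    Function.Injective (Φ ⊤ α) ↔
      ∀ G' : AddSubgroup G, G' < ⊤ →
        (α : TensorProduct ℤ K (⊤ : AddSubgroup G)) ∉ Set.range (tincl K G') := by
  have := isAddTorsionFree_of_nsmul_eq_zero hLtf
  constructor
  · rintro hinj G' hG' ⟨α', hα'⟩
    have hα'ker : α' ∈ LinearMap.ker (tmap j G') := (tincl_mem_ker_tmap_iff j G').1 (hα' ▸ α.2)
    obtain ⟨χ, hχ, hres⟩ := exists_ne_zero_dresHom_eq_zero hG'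
    refine hχ (hinj ?_)
    rw [hnat G' ⟨α', hα'ker⟩ α hα'.symm, AddMonoidHom.comp_apply, hres, map_zero, map_zero]
  · intro hα
    rw [injective_iff_map_eq_zero]
    by_contra! ⟨χ, hΦχ, hχ⟩
    set G' := χ.ker.map (⊤ : AddSubgroup G).subtype
    -- every character vanishing on `G' = ker χ` is a multiple of `χ`, hence killed by `Φ ⊤ α`
    obtain ⟨f, hf⟩ := exists_comp_dresHom_eq G' (Φ ⊤ α) fun ψ hψ => by
      rw [dresHom_eq_zero_iff, addSubgroupOf_map_subtype_top] at hψ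
      obtain ⟨k, rfl⟩ := exists_eq_zsmul_of_ker_le χ ψ hψ
      rw [map_zsmul, hΦχ, smul_zero]
    set α' := (Φ G').symm f
    have hβ : tincl K G' α' ∈ LinearMap.ker (tmap j ⊤) := (tincl_mem_ker_tmap_iff j G').2 α'.2
    have hβα : (⟨_, hβ⟩ : LinearMap.ker (tmap j ⊤)) = α :=
      (Φ ⊤).injective (by rw [hnat G' α' _ rfl, AddEquiv.apply_symm_apply, hf])
    exact hα G' (map_subtype_top_lt_top (mt AddMonoidHom.ker_eq_top_iff.1 hχ))
      ⟨α', congrArg Subtype.val hβα⟩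

/-- with `0 → K → L → M → 0` exact, `L` torsion-free, `G` finite
abelian, and `Φ` the (natural in subgroups of `G`) family of canonical isomorphisms
`ker(j ⊗ id) ≅ Hom(Ĝ', M)`, the homomorphism `Φ_G(α)` is injective iff `α` does not
lie in the image of `K ⊗ G'` for any proper subgroup `G'` of `G`. -/
theorem Phi_injective_iff {K L M G : Type*}
    [AddCommGroup K] [AddCommGroup L] [AddCommGroup M] [AddCommGroup G] [Finite G]
    (j : K →+ L) (q : L →+ M)
    (hj : Function.Injective j) (hq : Function.Surjective q)
    (hexact : ∀ l : L, (∃ k : K, j k = l) ↔ q l = 0)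
    (hLtf : ∀ (l : L) (n : ℕ), n ≠ 0 → n • l = 0 → l = 0)
    (Φ : ∀ G' : AddSubgroup G,
      (LinearMap.ker (tmap j G')) ≃+ ((G' →+ QZ) →+ M))
    (hnat : ∀ (G' : AddSubgroup G) (α' : LinearMap.ker (tmap j G'))
      (β : LinearMap.ker (tmap j (⊤ : AddSubgroup G))),
      (β : TensorProduct ℤ K (⊤ : AddSubgroup G)) = tincl K G' (α' : TensorProduct ℤ K G') →
      Φ ⊤ β = (Φ G' α').comp (dresHom G'))
    (α : LinearMap.ker (tmap j (⊤ : AddSubgroup G))) :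
    Function.Injective (Φ ⊤ α) ↔
      ∀ G' : AddSubgroup G, G' < ⊤ →
        (α : TensorProduct ℤ K (⊤ : AddSubgroup G)) ∉ Set.range (tincl K G') :=
  Phi_injective_iff_general j hLtf Φ hnat α
end
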